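/- Suppose X(τ), τ ∈ [0,T], is a real-valued continuous stochastic process such that for every δ > 0 and every ν in a family, E ∫₀^T 1_{{X^ν(τ) ≤ δ}} dτ ≤ Cδ with C independent of ν, and suppose X^ν converges in distribution in C([0,T],ℝ) to a process X⁰. Then E ∫₀^T 1_{{X⁰(τ) ≤ δ}} dτ ≤ Cδ for all δ > 0, and in particular E ∫₀^T 1_{{X⁰(τ) ≤ δ}} dτ → 0 as δ → 0. -/

import Mathlib

open MeasureTheory Filter

attribute [local instance] MeasureTheory.Measure.Subtype.measureSpace

/-- The occupation time `∫₀^T 1_{x(τ) ≤ δ} dτ` of a continuous path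
`x : [0,T] → ℝ` below level `δ`. -/
noncomputable def occupation (T δ : ℝ) (x : C(Set.Icc (0:ℝ) T, ℝ)) : ℝ :=
  ∫ τ : Set.Icc (0:ℝ) T, (if x τ ≤ δ then (1:ℝ) else 0)

/-!
The occupation time `x ↦ ∫₀^T 1_{x(τ) ≤ δ} dτ` is not a continuous functional of the path, so
weak convergence does not apply to it directly. For `δ < δ'`, a continuous cutoff `g` with
`1_{≤δ} ≤ g ≤ 1_{≤δ'}` yields the bounded continuous functional `x ↦ ∫₀^T g(x(τ)) dτ`, squeezed
between the occupation times at levels `δ` and `δ'`. Passing to the limit in its expectations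
gives `E ∫₀^T 1_{X⁰ ≤ δ} ≤ Cδ'`, and letting `δ' ↓ δ` gives the bound `Cδ`, which tends to `0`.
-/

open Set BoundedContinuousFunction Topology

instance isFiniteMeasure_volume_Icc (a b : ℝ) : IsFiniteMeasure (volume : Measure (Icc a b)) :=
  ⟨by
    rw [Measure.Subtype.volume_univ measurableSet_Icc.nullMeasurableSet, Real.volume_Icc]
    exact ENNReal.ofReal_lt_top⟩

section IntegralComp

variable {α β : Type*} [TopologicalSpace α] [CompactSpace α] [MeasurableSpace α]
  [OpensMeasurableSpace α] [PseudoMetricSpace β]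

noncomputable def BoundedContinuousFunction.integralComp (ν : Measure α) [IsFiniteMeasure ν]
    (g : β →ᵇ ℝ) : C(α, β) →ᵇ ℝ :=
  .ofNormedAddCommGroup (fun x => ∫ τ, g (x τ) ∂ν)
    (continuous_of_dominated (bound := fun _ => ‖g‖)
      (fun x => (g.continuous.comp x.continuous).aestronglyMeasurable)
      (fun x => ae_of_all _ fun τ => g.norm_coe_le_norm (x τ))
      (integrable_const _)
      (ae_of_all _ fun τ => g.continuous.comp (continuous_eval_const τ)))
    (‖g‖ * ν.real univ)
    (fun x => norm_integral_le_of_norm_le_const (ae_of_all _ fun τ => g.norm_coe_le_norm (x τ)))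

end IntegralComp

lemma exists_bcf_ite_le_le_ite {δ δ' : ℝ} (h : δ < δ') :
    ∃ g : ℝ →ᵇ ℝ, ∀ t, ((if t ≤ δ then 1 else 0) ≤ g t ∧ g t ≤ if t ≤ δ' then 1 else 0) := by
  obtain ⟨g, hg0, hg1, hg⟩ := exists_bounded_zero_one_of_closed isClosed_Ici isClosed_Iic
    (Ici_disjoint_Iic.mpr h.not_ge)
  refine ⟨g, fun t => ⟨?_, ?_⟩⟩
  · split_ifs with ht
    exacts [(hg1 ht).ge, (hg t).1]
  · split_ifs with ht
    exacts [(hg t).2, (hg0 (mem_Ici.mpr (not_le.mp ht).le)).le]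

namespace MeasureTheory.ProbabilityMeasure

variable {X ι : Type*} [TopologicalSpace X] [MeasurableSpace X] [OpensMeasurableSpace X]
  {l : Filter ι} [l.NeBot] {μ : ι → ProbabilityMeasure X} {μ0 : ProbabilityMeasure X}

lemma integral_le_of_tendsto_of_le_bcf_le (hμ : Tendsto μ l (𝓝 μ0)) {f f' : X → ℝ} (F : X →ᵇ ℝ)
    (hfF : f ≤ F) (hFf' : ⇑F ≤ f') (hf : Integrable f μ0) (hf' : ∀ i, Integrable f' (μ i))
    {c : ℝ} (hc : ∀ i, ∫ x, f' x ∂(μ i : Measure X) ≤ c) :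
    ∫ x, f x ∂(μ0 : Measure X) ≤ c :=
  calc ∫ x, f x ∂(μ0 : Measure X) ≤ ∫ x, F x ∂(μ0 : Measure X) :=
        integral_mono hf (F.integrable _) hfF
    _ ≤ c := le_of_tendsto (tendsto_iff_forall_integral_tendsto.mp hμ F) <|
        Eventually.of_forall fun i => (integral_mono (F.integrable _) (hf' i) hFf').trans (hc i)

end MeasureTheory.ProbabilityMeasure

section Occupation

variable {T : ℝ}

lemma integrable_ite_le (δ : ℝ) (x : C(Icc (0:ℝ) T, ℝ)) :
    Integrable (fun τ : Icc (0:ℝ) T => if x τ ≤ δ then (1:ℝ) else 0) :=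
  (integrable_const (1:ℝ)).mono'
    ((Measurable.ite (measurableSet_Iic.preimage x.continuous.measurable) measurable_const
      measurable_const).aestronglyMeasurable)
    (ae_of_all _ fun τ => by split_ifs <;> simp)

lemma occupation_nonneg (δ : ℝ) (x : C(Icc (0:ℝ) T, ℝ)) : 0 ≤ occupation T δ x :=
  integral_nonneg fun τ => by dsimp only; split_ifs <;> norm_num

lemma occupation_le (δ : ℝ) (x : C(Icc (0:ℝ) T, ℝ)) :
    occupation T δ x ≤ (volume : Measure (Icc (0:ℝ) T)).real univ := by
  have h := norm_integral_le_of_norm_le_const (μ := (volume : Measure (Icc (0:ℝ) T))) (C := 1)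
    (f := fun τ => if x τ ≤ δ then (1:ℝ) else 0) (ae_of_all _ fun τ => by split_ifs <;> simp)
  rw [one_mul, Real.norm_eq_abs] at h
  exact (le_abs_self _).trans h

lemma occupation_le_integralComp_le_occupation {δ δ' : ℝ} {g : ℝ →ᵇ ℝ}
    (hg : ∀ t, ((if t ≤ δ then 1 else 0) ≤ g t ∧ g t ≤ if t ≤ δ' then 1 else 0))
    (x : C(Icc (0:ℝ) T, ℝ)) :
    occupation T δ x ≤ g.integralComp volume x ∧ g.integralComp volume x ≤ occupation T δ' x :=
  ⟨integral_mono (integrable_ite_le δ x) ((g.compContinuous x).integrable _) fun τ => (hg (x τ)).1,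
    integral_mono ((g.compContinuous x).integrable _) (integrable_ite_le δ' x)
      fun τ => (hg (x τ)).2⟩

variable [MeasurableSpace C(Icc (0:ℝ) T, ℝ)] [BorelSpace C(Icc (0:ℝ) T, ℝ)]

lemma stronglyMeasurable_occupation (δ : ℝ) : StronglyMeasurable (occupation T δ) := by
  have hS : MeasurableSet {p : C(Icc (0:ℝ) T, ℝ) × Icc (0:ℝ) T | p.1 p.2 ≤ δ} :=
    (measurableSet_Iic (a := δ)).preimage (by fun_prop)
  exact (Measurable.ite hS measurable_const measurable_const).stronglyMeasurable.integral_prod_right'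

lemma integrable_occupation (δ : ℝ) (P : Measure C(Icc (0:ℝ) T, ℝ)) [IsFiniteMeasure P] :
    Integrable (occupation T δ) P :=
  (integrable_const _).mono' (stronglyMeasurable_occupation δ).aestronglyMeasurable
    (ae_of_all _ fun x => by
      rw [Real.norm_eq_abs, abs_of_nonneg (occupation_nonneg δ x)]
      exact occupation_le δ x)

end Occupation

section Limit

variable {T : ℝ} [MeasurableSpace C(Icc (0:ℝ) T, ℝ)] [BorelSpace C(Icc (0:ℝ) T, ℝ)]
  {ι : Type*} {l : Filter ι} [l.NeBot] {μ : ι → ProbabilityMeasure C(Icc (0:ℝ) T, ℝ)}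
  {μ0 : ProbabilityMeasure C(Icc (0:ℝ) T, ℝ)}

lemma integral_occupation_le_of_lt (hμ : Tendsto μ l (𝓝 μ0)) {δ δ' c : ℝ} (hδ : δ < δ')
    (hc : ∀ i, ∫ x, occupation T δ' x ∂(μ i : Measure _) ≤ c) :
    ∫ x, occupation T δ x ∂(μ0 : Measure _) ≤ c := by
  obtain ⟨g, hg⟩ := exists_bcf_ite_le_le_ite hδ
  exact ProbabilityMeasure.integral_le_of_tendsto_of_le_bcf_le hμ (g.integralComp volume)
    (fun x => (occupation_le_integralComp_le_occupation hg x).1)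
    (fun x => (occupation_le_integralComp_le_occupation hg x).2)
    (integrable_occupation δ _) (fun i => integrable_occupation δ' _) hc

lemma integral_occupation_le_mul (hμ : Tendsto μ l (𝓝 μ0)) {C δ : ℝ} (hδ : 0 < δ)
    (hbound : ∀ δ > (0:ℝ), ∀ i, ∫ x, occupation T δ x ∂(μ i : Measure _) ≤ C * δ) :
    ∫ x, occupation T δ x ∂(μ0 : Measure _) ≤ C * δ :=
  ge_of_tendsto (((continuous_const_mul C).tendsto δ).mono_left nhdsWithin_le_nhds) <|
    eventually_nhdsWithin_of_forall (s := Ioi δ) fun δ' hδ' =>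
      integral_occupation_le_of_lt hμ hδ' (hbound δ' (hδ.trans hδ'))

end Limit

theorem occupation_bound_in_the_limit_general (T C : ℝ)
    [MeasurableSpace C(Set.Icc (0:ℝ) T, ℝ)] [BorelSpace C(Set.Icc (0:ℝ) T, ℝ)]
    (μ : ℕ → ProbabilityMeasure C(Set.Icc (0:ℝ) T, ℝ))
    (μ0 : ProbabilityMeasure C(Set.Icc (0:ℝ) T, ℝ))
    (hconv : Tendsto μ atTop (nhds μ0))
    (hbound : ∀ δ > (0:ℝ), ∀ n, ∫ x, occupation T δ x ∂(μ n : Measure _) ≤ C * δ) :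
    (∀ δ > (0:ℝ), ∫ x, occupation T δ x ∂(μ0 : Measure _) ≤ C * δ)
    ∧ Tendsto (fun δ : ℝ => ∫ x, occupation T δ x ∂(μ0 : Measure _))
        (nhdsWithin 0 (Set.Ioi 0)) (nhds 0) := by
  have hle : ∀ δ > (0:ℝ), ∫ x, occupation T δ x ∂(μ0 : Measure _) ≤ C * δ :=
    fun δ hδ => integral_occupation_le_mul hconv hδ hbound
  have hCδ : Tendsto (fun δ : ℝ => C * δ) (𝓝[>] 0) (𝓝 0) := by
    simpa using ((continuous_const_mul C).tendsto 0).mono_left nhdsWithin_le_nhds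
  exact ⟨hle, squeeze_zero' (Eventually.of_forall fun δ => integral_nonneg (occupation_nonneg δ))
    (eventually_nhdsWithin_of_forall hle) hCδ⟩

/-- If continuous processes `X^ν` (represented by their laws `μ ν` on
`C([0,T],ℝ)`) satisfy `E ∫₀^T 1_{X^ν ≤ δ} dτ ≤ Cδ` uniformly in `ν`, and
converge in distribution to `X⁰` (law `μ0`), then
`E ∫₀^T 1_{X⁰ ≤ δ} dτ ≤ Cδ` for every `δ > 0`; in particular this expectation
tends to `0` as `δ → 0⁺`. -/
theorem occupation_bound_in_the_limit (T C : ℝ) (hT : 0 < T)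
    [MeasurableSpace C(Set.Icc (0:ℝ) T, ℝ)] [BorelSpace C(Set.Icc (0:ℝ) T, ℝ)]
    (μ : ℕ → ProbabilityMeasure C(Set.Icc (0:ℝ) T, ℝ))
    (μ0 : ProbabilityMeasure C(Set.Icc (0:ℝ) T, ℝ))
    (hconv : Tendsto μ atTop (nhds μ0))
    (hbound : ∀ δ > (0:ℝ), ∀ n, ∫ x, occupation T δ x ∂(μ n : Measure _) ≤ C * δ) :
    (∀ δ > (0:ℝ), ∫ x, occupation T δ x ∂(μ0 : Measure _) ≤ C * δ)
    ∧ Tendsto (fun δ : ℝ => ∫ x, occupation T δ x ∂(μ0 : Measure _))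
        (nhdsWithin 0 (Set.Ioi 0)) (nhds 0) :=
  occupation_bound_in_the_limit_general T C μ μ0 hconv hbound
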